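/- (Theorem 3.2, expected generalization bound.) Let ξ₁,…,ξ_N be i.i.d. samples from P*, P̂_N their empirical measure, τ_ε := (1+ε)·inf_{x∈𝒳} E_{P̂_N}[h(x,ξ)] (a.s. finite), and (x̂_N, k̂_N) a random pair that is a.s. RS-feasible for τ_ε with respect to P̂_N. Suppose that for constants c₁, c₂ > 0, a > 1 and p := max(m,2), the random variable D := d_W(P*, P̂_N) satisfies P{D ≥ r} ≤ c₁·exp(−c₂·N·r^p) for r ∈ (0,1] and P{D ≥ r} ≤ c₁·exp(−c₂·N·r^a) for r > 1. Then, with J* := inf_{x∈𝒳} E_{P*}[h(x,ξ)] assumed finite, E[ E_{P*}[h(x̂_N,ξ)] − J* ] ≤ ε·J* + (2+ε)·L·( C_p·N^{−1/p} + C_a·N^{−1/a} ), where C_p = ∫₀^∞ c₁ e^{−c₂ t^p} dt and C_a = ∫₀^∞ c₁ e^{−c₂ t^a} dt, and the outer expectation is over the sample data. -/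

import Mathlib

/-!
The pair `(x̂, k̂)` is feasible in particular against `P = P̂_N`, where the Wasserstein term
vanishes, so `E_{P̂_N}[h(x̂, ·)] ≤ τ_ε`. By Kantorovich–Rubinstein duality (the easy direction),
`E_P[h(x, ·)]` moves by at most `L · d_W(P*, P̂_N)` when `P̂_N` is replaced by `P*`, both for `x̂`
and inside the infimum; this gives the pointwise bound `E_{P*}[h(x̂, ·)] - J* ≤ ε J* + (2 + ε) L D`.
Taking expectations, the layer-cake formula `E[D] = ∫₀^∞ P{D ≥ t} dt` and the tail bounds give
`E[D] ≤ ∫₀^∞ c₁ e^{-c₂ N t^p} dt + ∫₀^∞ c₁ e^{-c₂ N t^a} dt`, and the substitution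
`t ↦ N^{1/q} t` extracts the factors `N^{-1/p}` and `N^{-1/a}`.
-/

open MeasureTheory

noncomputable section

abbrev Vec (m : ℕ) := EuclideanSpace ℝ (Fin m)

/-- A coupling of two Borel probability measures on `Vec m`. -/
def IsCoupling {m : ℕ} (γ : Measure (Vec m × Vec m)) (P Q : Measure (Vec m)) : Prop :=
  IsProbabilityMeasure γ ∧ γ.map Prod.fst = P ∧ γ.map Prod.snd = Q

/-- Type-1 Wasserstein distance: infimum of `∫ ‖ξ₁ - ξ₂‖₂ dγ` over couplings `γ`. -/
noncomputable def wDist {m : ℕ} (P Q : Measure (Vec m)) : ℝ :=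
  sInf {c : ℝ | ∃ γ : Measure (Vec m × Vec m), IsCoupling γ P Q ∧ c = ∫ p, ‖p.1 - p.2‖ ∂γ}

/-- `(x, k)` is RS-feasible for reference value `τ` with respect to `Phat`. -/
def RSFeasible {m : ℕ} {X : Type*} (h : X → Vec m → ℝ)
    (Phat : Measure (Vec m)) (τ : ℝ) (x : X) (k : ℝ) : Prop :=
  0 ≤ k ∧ ∀ P : Measure (Vec m), IsProbabilityMeasure P →
    Integrable (fun ξ => ‖ξ‖) P → (∫ ξ, h x ξ ∂P) - τ ≤ k * wDist P Phat

/-- Empirical measure `(1/N) ∑ δ_{x i}`. -/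
noncomputable def empMeas {m N : ℕ} (xs : Fin N → Vec m) : Measure (Vec m) :=
  (N : ENNReal)⁻¹ • ∑ i : Fin N, Measure.dirac (xs i)

open Set

theorem LipschitzWith.integrable_of_integrable_norm {E F : Type*} [NormedAddCommGroup E]
    [MeasurableSpace E] [OpensMeasurableSpace E] [NormedAddCommGroup F]
    [SecondCountableTopology F] {K : NNReal} {f : E → F} (hf : LipschitzWith K f)
    {P : Measure E} [IsFiniteMeasure P] (hP : Integrable (fun ξ => ‖ξ‖) P) :
    Integrable f P := by
  refine ((hP.const_mul K).add (integrable_const ‖f 0‖)).mono'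
    hf.continuous.aestronglyMeasurable (ae_of_all _ fun ξ => ?_)
  have := hf.norm_sub_le ξ 0
  rw [sub_zero] at this
  simp only [Pi.add_apply]
  linarith [norm_le_insert' (f ξ) (f 0)]

theorem ciInf_le_ciInf_add {X : Type*} [Nonempty X] {F G : X → ℝ} {c : ℝ}
    (hG : BddBelow (range G)) (hFG : ∀ x, G x ≤ F x + c) : ⨅ x, G x ≤ (⨅ x, F x) + c := by
  rw [← sub_le_iff_le_add]
  exact le_ciInf fun x => sub_le_iff_le_add.2 ((ciInf_le hG x).trans (hFG x))

section Wasserstein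

variable {m : ℕ}

theorem wDist_nonneg (P Q : Measure (Vec m)) : 0 ≤ wDist P Q :=
  Real.sInf_nonneg fun _ ⟨_, _, hc⟩ => hc ▸ integral_nonneg fun _ => norm_nonneg _

theorem wDist_self (P : Measure (Vec m)) [IsProbabilityMeasure P] : wDist P P = 0 := by
  have hdiag : Measurable fun ξ : Vec m => (ξ, ξ) := measurable_id.prodMk measurable_id
  refine le_antisymm (csInf_le ⟨0, fun _ ⟨_, _, hc⟩ => hc ▸ integral_nonneg fun _ =>
    norm_nonneg _⟩ ⟨P.map (fun ξ => (ξ, ξ)), ⟨Measure.isProbabilityMeasure_map hdiag.aemeasurable,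
      ?_, ?_⟩, ?_⟩) (wDist_nonneg P P)
  · rw [Measure.map_map measurable_fst hdiag]; exact Measure.map_id
  · rw [Measure.map_map measurable_snd hdiag]; exact Measure.map_id
  · rw [integral_map (f := fun p : Vec m × Vec m => ‖p.1 - p.2‖) hdiag.aemeasurable
      (continuous_fst.sub continuous_snd).norm.aestronglyMeasurable]
    simp

theorem IsCoupling.abs_integral_sub_integral_le {γ : Measure (Vec m × Vec m)}
    {P Q : Measure (Vec m)} (hγ : IsCoupling γ P Q) (hP : Integrable (fun ξ => ‖ξ‖) P)
    (hQ : Integrable (fun ξ => ‖ξ‖) Q) {K : NNReal} {f : Vec m → ℝ} (hf : LipschitzWith K f) :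
    |(∫ ξ, f ξ ∂P) - ∫ ξ, f ξ ∂Q| ≤ K * ∫ p, ‖p.1 - p.2‖ ∂γ := by
  obtain ⟨_, rfl, rfl⟩ := hγ
  have hf₁ : Integrable (fun p => f p.1) γ :=
    (hf.integrable_of_integrable_norm hP).comp_measurable measurable_fst
  have hf₂ : Integrable (fun p => f p.2) γ :=
    (hf.integrable_of_integrable_norm hQ).comp_measurable measurable_snd
  have hdist : Integrable (fun p : Vec m × Vec m => ‖p.1 - p.2‖) γ :=
    ((integrable_norm_iff aestronglyMeasurable_id).1 hP |>.comp_measurable measurable_fst).sub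
      ((integrable_norm_iff aestronglyMeasurable_id).1 hQ |>.comp_measurable measurable_snd)
      |>.norm
  rw [integral_map measurable_fst.aemeasurable hf.continuous.aestronglyMeasurable,
    integral_map measurable_snd.aemeasurable hf.continuous.aestronglyMeasurable,
    ← integral_sub hf₁ hf₂, ← integral_const_mul]
  refine (abs_integral_le_integral_abs).trans
    (integral_mono (hf₁.sub hf₂).abs (hdist.const_mul _) fun p => ?_)
  simpa only [← Real.dist_eq, ← dist_eq_norm] using hf.dist_le_mul p.1 p.2

theorem abs_integral_sub_integral_le_mul_wDist (P Q : Measure (Vec m)) [IsProbabilityMeasure P]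
    [IsProbabilityMeasure Q] (hP : Integrable (fun ξ => ‖ξ‖) P)
    (hQ : Integrable (fun ξ => ‖ξ‖) Q) {K : NNReal} {f : Vec m → ℝ} (hf : LipschitzWith K f) :
    |(∫ ξ, f ξ ∂P) - ∫ ξ, f ξ ∂Q| ≤ K * wDist P Q := by
  have hprod : IsCoupling (P.prod Q) P Q := ⟨inferInstance, by simp, by simp⟩
  rw [wDist, ← smul_eq_mul, ← Real.sInf_smul_of_nonneg K.coe_nonneg]
  refine le_csInf (Set.Nonempty.smul_set ⟨_, _, hprod, rfl⟩) ?_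
  rintro _ ⟨_, ⟨γ, hγ, rfl⟩, rfl⟩
  exact hγ.abs_integral_sub_integral_le hP hQ hf

end Wasserstein

theorem isProbabilityMeasure_empMeas {m N : ℕ} (hN : 0 < N) (xs : Fin N → Vec m) :
    IsProbabilityMeasure (empMeas xs) := by
  constructor
  simp only [empMeas, Measure.smul_apply, Measure.coe_finsetSum, Finset.sum_apply,
    measure_univ, Finset.sum_const, Finset.card_univ, Fintype.card_fin, nsmul_eq_mul, mul_one,
    smul_eq_mul]
  exact ENNReal.inv_mul_cancel (by exact_mod_cast hN.ne') (ENNReal.natCast_ne_top N)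

theorem integrable_empMeas {m N : ℕ} (hN : 0 < N) (xs : Fin N → Vec m) (f : Vec m → ℝ) :
    Integrable f (empMeas xs) :=
  ((integrable_finsetSum_measure).2 fun i _ => integrable_dirac enorm_lt_top).smul_measure
    (by simp [hN.ne'])

section RSFeasible

variable {m : ℕ} {X : Type*} {h : X → Vec m → ℝ}

theorem RSFeasible.integral_le {Q : Measure (Vec m)} [IsProbabilityMeasure Q]
    (hQ : Integrable (fun ξ => ‖ξ‖) Q) {τ : ℝ} {x : X} {k : ℝ} (hfeas : RSFeasible h Q τ x k) :
    ∫ ξ, h x ξ ∂Q ≤ τ := by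
  have := hfeas.2 Q inferInstance hQ
  rwa [wDist_self, mul_zero, sub_nonpos] at this

theorem RSFeasible.integral_sub_iInf_le [Nonempty X] {K : NNReal} (hh : ∀ x, LipschitzWith K (h x))
    {P Q : Measure (Vec m)} [IsProbabilityMeasure P] [IsProbabilityMeasure Q]
    (hP : Integrable (fun ξ => ‖ξ‖) P) (hQ : Integrable (fun ξ => ‖ξ‖) Q) {ε : ℝ}
    (hε : 0 ≤ 1 + ε) (hbdd : BddBelow (range fun x => ∫ ξ, h x ξ ∂Q)) {x : X} {k : ℝ}
    (hfeas : RSFeasible h Q ((1 + ε) * ⨅ x, ∫ ξ, h x ξ ∂Q) x k) :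
    (∫ ξ, h x ξ ∂P) - ⨅ x, ∫ ξ, h x ξ ∂P ≤
      ε * (⨅ x, ∫ ξ, h x ξ ∂P) + (2 + ε) * K * wDist P Q := by
  have htransfer (x : X) := abs_le.1 (abs_integral_sub_integral_le_mul_wDist P Q hP hQ (hh x))
  have hinf : ⨅ x, ∫ ξ, h x ξ ∂Q ≤ (⨅ x, ∫ ξ, h x ξ ∂P) + K * wDist P Q :=
    ciInf_le_ciInf_add hbdd fun x => by linarith [(htransfer x).1]
  rw [sub_le_iff_le_add]
  calc (∫ ξ, h x ξ ∂P) ≤ (∫ ξ, h x ξ ∂Q) + K * wDist P Q := by linarith [(htransfer x).2]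
    _ ≤ (1 + ε) * (⨅ x, ∫ ξ, h x ξ ∂Q) + K * wDist P Q := by gcongr; exact hfeas.integral_le hQ
    _ ≤ (1 + ε) * ((⨅ x, ∫ ξ, h x ξ ∂P) + K * wDist P Q) + K * wDist P Q := by gcongr
    _ = ε * (⨅ x, ∫ ξ, h x ξ ∂P) + (2 + ε) * K * wDist P Q + ⨅ x, ∫ ξ, h x ξ ∂P := by ring

end RSFeasible

theorem integral_Ioi_comp_mul_rpow {E : Type*} [NormedAddCommGroup E] [NormedSpace ℝ E]
    (g : ℝ → E) {s q : ℝ} (hs : 0 < s) (hq : q ≠ 0) :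
    ∫ t in Ioi 0, g (s * t ^ q) = s ^ (-1 / q) • ∫ t in Ioi 0, g (t ^ q) := by
  have hs' : 0 < s ^ (1 / q) := Real.rpow_pos_of_pos hs _
  have hscale := integral_comp_mul_left_Ioi (fun t => g (t ^ q)) 0 hs'
  rw [mul_zero, ← Real.rpow_neg_one, ← Real.rpow_mul hs.le, mul_neg_one, ← neg_div] at hscale
  rw [← hscale]
  refine setIntegral_congr_fun measurableSet_Ioi fun t ht => ?_
  rw [Real.mul_rpow hs'.le (le_of_lt ht), ← Real.rpow_mul hs.le, one_div_mul_cancel hq,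
    Real.rpow_one]

theorem integrableOn_Ioi_exp_neg_mul_rpow {b q : ℝ} (hb : 0 < b) (hq : 0 < q) :
    IntegrableOn (fun t => Real.exp (-(b * t ^ q))) (Ioi 0) := by
  simpa [neg_mul] using integrableOn_rpow_mul_exp_neg_mul_rpow neg_one_lt_zero hq hb

section TailBounds

variable {Ω : Type*} [MeasurableSpace Ω] {μ : Measure Ω} {D : Ω → ℝ}

theorem integral_le_setIntegral_of_meas_le (hD : 0 ≤ D) (hDm : AEMeasurable D μ) {g : ℝ → ℝ}
    (hg : IntegrableOn g (Ioi 0)) (hg0 : ∀ t > 0, 0 ≤ g t)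
    (htail : ∀ t > 0, μ {ω | t ≤ D ω} ≤ ENNReal.ofReal (g t)) :
    Integrable D μ ∧ ∫ ω, D ω ∂μ ≤ ∫ t in Ioi 0, g t := by
  have hlintegral : ∫⁻ ω, ENNReal.ofReal (D ω) ∂μ ≤ ENNReal.ofReal (∫ t in Ioi 0, g t) := by
    rw [lintegral_eq_lintegral_meas_le μ (ae_of_all _ hD) hDm,
      ofReal_integral_eq_lintegral_ofReal hg ((ae_restrict_iff' measurableSet_Ioi).2
        (ae_of_all _ hg0))]
    exact setLIntegral_mono' measurableSet_Ioi htail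
  refine ⟨⟨hDm.aestronglyMeasurable, ?_⟩, ?_⟩
  · rw [hasFiniteIntegral_iff_ofReal (ae_of_all _ hD)]
    exact hlintegral.trans_lt ENNReal.ofReal_lt_top
  · rw [integral_eq_lintegral_of_nonneg_ae (ae_of_all _ hD) hDm.aestronglyMeasurable]
    exact ENNReal.toReal_le_of_le_ofReal (setIntegral_nonneg measurableSet_Ioi hg0) hlintegral

theorem integral_le_of_two_regime_tail (hD : 0 ≤ D) (hDm : AEMeasurable D μ) {c b p a : ℝ}
    (hc : 0 ≤ c) (hb : 0 < b) (hp : 0 < p) (ha : 0 < a)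
    (htail₁ : ∀ r : ℝ, 0 < r → r ≤ 1 →
      μ {ω | r ≤ D ω} ≤ ENNReal.ofReal (c * Real.exp (-(b * r ^ p))))
    (htail₂ : ∀ r : ℝ, 1 < r →
      μ {ω | r ≤ D ω} ≤ ENNReal.ofReal (c * Real.exp (-(b * r ^ a)))) :
    Integrable D μ ∧ ∫ ω, D ω ∂μ ≤
      (∫ t in Ioi 0, c * Real.exp (-(b * t ^ p))) + ∫ t in Ioi 0, c * Real.exp (-(b * t ^ a)) := by
  have hp_int := (integrableOn_Ioi_exp_neg_mul_rpow hb hp).const_mul c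
  have ha_int := (integrableOn_Ioi_exp_neg_mul_rpow hb ha).const_mul c
  rw [← integral_add hp_int ha_int]
  refine integral_le_setIntegral_of_meas_le hD hDm (hp_int.add ha_int)
    (fun t _ => by positivity) fun t ht => ?_
  rcases le_or_gt t 1 with ht1 | ht1
  · exact (htail₁ t ht ht1).trans (ENNReal.ofReal_le_ofReal (le_add_of_nonneg_right (by positivity)))
  · exact (htail₂ t ht1).trans (ENNReal.ofReal_le_ofReal (le_add_of_nonneg_left (by positivity)))

end TailBounds

theorem expected_generalization_bound_general {m N : ℕ} (hN : 0 < N)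
    {X : Type*} [Nonempty X]
    {Ω : Type*} [MeasurableSpace Ω] (μ : Measure Ω) [IsProbabilityMeasure μ]
    (h : X → Vec m → ℝ) (L : ℝ) (hL : 0 ≤ L)
    (hLip : ∀ x ξ η, |h x ξ - h x η| ≤ L * ‖ξ - η‖)
    (Pstar : Measure (Vec m)) [IsProbabilityMeasure Pstar]
    (hPstarmom : Integrable (fun ξ => ‖ξ‖) Pstar)
    (ξs : Fin N → Ω → Vec m)
    -- empirical measure
    (Phat : Ω → Measure (Vec m)) (hPhat : ∀ ω, Phat ω = empMeas (fun i => ξs i ω))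
    -- reference value
    (ε : ℝ) (hε : 0 < ε)
    (τ : Ω → ℝ) (hτ : ∀ ω, τ ω = (1 + ε) * ⨅ x, ∫ ξ, h x ξ ∂(Phat ω))
    (hfin : ∀ᵐ ω ∂μ, BddBelow (Set.range fun x => ∫ ξ, h x ξ ∂(Phat ω)))
    (hfinPstar : BddBelow (Set.range fun x => ∫ ξ, h x ξ ∂Pstar))
    -- almost surely RS-feasible random pair
    (xhat : Ω → X) (khat : Ω → ℝ)
    (hfeas : ∀ᵐ ω ∂μ, RSFeasible h (Phat ω) (τ ω) (xhat ω) (khat ω))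
    -- two-regime concentration of D = d_W(Pstar, Phat_N)
    (c₁ c₂ a : ℝ) (hc₁ : 0 < c₁) (hc₂ : 0 < c₂) (ha : 1 < a)
    (hDmeas : Measurable fun ω => wDist Pstar (Phat ω))
    (htail₁ : ∀ r : ℝ, 0 < r → r ≤ 1 →
      μ {ω | r ≤ wDist Pstar (Phat ω)} ≤
        ENNReal.ofReal (c₁ * Real.exp (-(c₂ * N * r ^ (max (m : ℝ) 2)))))
    (htail₂ : ∀ r : ℝ, 1 < r →
      μ {ω | r ≤ wDist Pstar (Phat ω)} ≤
        ENNReal.ofReal (c₁ * Real.exp (-(c₂ * N * r ^ a)))) :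
    (∫ ω, ((∫ ξ, h (xhat ω) ξ ∂Pstar) - (⨅ x, ∫ ξ, h x ξ ∂Pstar)) ∂μ) ≤
      ε * (⨅ x, ∫ ξ, h x ξ ∂Pstar) + (2 + ε) * L *
        ((∫ t in Set.Ioi (0 : ℝ), c₁ * Real.exp (-(c₂ * t ^ (max (m : ℝ) 2))))
            * (N : ℝ) ^ (-1 / (max (m : ℝ) 2))
          + (∫ t in Set.Ioi (0 : ℝ), c₁ * Real.exp (-(c₂ * t ^ a)))
            * (N : ℝ) ^ (-1 / a)) := by
  set p : ℝ := max (m : ℝ) 2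
  set J := ⨅ x, ∫ ξ, h x ξ ∂Pstar
  set D := fun ω => wDist Pstar (Phat ω)
  have hp : 0 < p := lt_max_of_lt_right two_pos
  have hNpos : (0 : ℝ) < N := Nat.cast_pos.2 hN
  have hPhat_prob (ω : Ω) : IsProbabilityMeasure (Phat ω) :=
    hPhat ω ▸ isProbabilityMeasure_empMeas hN _
  have hPhat_mom (ω : Ω) : Integrable (fun ξ => ‖ξ‖) (Phat ω) :=
    hPhat ω ▸ integrable_empMeas hN _ _
  have hh (x : X) : LipschitzWith L.toNNReal (h x) := LipschitzWith.of_dist_le_mul fun ξ η => by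
    rw [Real.coe_toNNReal L hL, Real.dist_eq, dist_eq_norm]
    exact hLip x ξ η
  have hpointwise : ∀ᵐ ω ∂μ, (∫ ξ, h (xhat ω) ξ ∂Pstar) - J ≤ ε * J + (2 + ε) * L * D ω := by
    filter_upwards [hfeas, hfin] with ω hfeas_ω hbdd_ω
    rw [hτ] at hfeas_ω
    simpa only [Real.coe_toNNReal L hL] using hfeas_ω.integral_sub_iInf_le hh hPstarmom
      (hPhat_mom ω) (by linarith) hbdd_ω
  have hscale (q : ℝ) (hq : 0 < q) : ∫ t in Ioi 0, c₁ * Real.exp (-(c₂ * N * t ^ q)) =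
      (∫ t in Ioi 0, c₁ * Real.exp (-(c₂ * t ^ q))) * (N : ℝ) ^ (-1 / q) := by
    have := integral_Ioi_comp_mul_rpow (fun u => c₁ * Real.exp (-(c₂ * u))) hNpos hq.ne'
    simp only [smul_eq_mul, ← mul_assoc] at this
    rw [this, mul_comm]
  obtain ⟨hD_int, hD_le⟩ := integral_le_of_two_regime_tail (fun ω => wDist_nonneg _ _)
    hDmeas.aemeasurable hc₁.le (mul_pos hc₂ hNpos) hp (zero_lt_one.trans ha) htail₁ htail₂
  rw [hscale p hp, hscale a (zero_lt_one.trans ha)] at hD_le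
  calc ∫ ω, ((∫ ξ, h (xhat ω) ξ ∂Pstar) - J) ∂μ
      ≤ ∫ ω, (ε * J + (2 + ε) * L * D ω) ∂μ :=
        integral_mono_of_nonneg (ae_of_all _ fun ω => sub_nonneg.2 (ciInf_le hfinPstar _))
          ((integrable_const _).add (hD_int.const_mul _)) hpointwise
    _ = ε * J + (2 + ε) * L * ∫ ω, D ω ∂μ := by
        rw [integral_add (integrable_const _) (hD_int.const_mul _), integral_const,
          integral_const_mul, probReal_univ, one_smul]
    _ ≤ _ := by gcongr

/-- Theorem 3.2, expected generalization bound: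
E[ E_{P*}[h(xhat_N,.)] - J* ] <= eps J* + (2+eps) L (C_p N^{-1/p} + C_a N^{-1/a}). -/
theorem expected_generalization_bound {m N : ℕ} (hN : 0 < N)
    {X : Type*} [Nonempty X]
    {Ω : Type*} [MeasurableSpace Ω] (μ : Measure Ω) [IsProbabilityMeasure μ]
    (h : X → Vec m → ℝ) (L : ℝ) (hL : 0 ≤ L)
    (hLip : ∀ x ξ η, |h x ξ - h x η| ≤ L * ‖ξ - η‖)
    (hInt : ∀ x (P : Measure (Vec m)), IsProbabilityMeasure P →
      Integrable (fun ξ => ‖ξ‖) P → Integrable (h x) P)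
    (Pstar : Measure (Vec m)) [IsProbabilityMeasure Pstar]
    (hPstarmom : Integrable (fun ξ => ‖ξ‖) Pstar)
    -- i.i.d. samples from Pstar
    (ξs : Fin N → Ω → Vec m) (hmeas : ∀ i, Measurable (ξs i))
    (hindep : ProbabilityTheory.iIndepFun ξs μ)
    (hdist : ∀ i, μ.map (ξs i) = Pstar)
    -- empirical measure
    (Phat : Ω → Measure (Vec m)) (hPhat : ∀ ω, Phat ω = empMeas (fun i => ξs i ω))
    -- reference value
    (ε : ℝ) (hε : 0 < ε)
    (τ : Ω → ℝ) (hτ : ∀ ω, τ ω = (1 + ε) * ⨅ x, ∫ ξ, h x ξ ∂(Phat ω))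
    (hfin : ∀ᵐ ω ∂μ, BddBelow (Set.range fun x => ∫ ξ, h x ξ ∂(Phat ω)))
    (hfinPstar : BddBelow (Set.range fun x => ∫ ξ, h x ξ ∂Pstar))
    -- almost surely RS-feasible random pair
    (xhat : Ω → X) (khat : Ω → ℝ)
    (hfeas : ∀ᵐ ω ∂μ, RSFeasible h (Phat ω) (τ ω) (xhat ω) (khat ω))
    (hxhatmeas : Measurable fun ω => ∫ ξ, h (xhat ω) ξ ∂Pstar)
    -- two-regime concentration of D = d_W(Pstar, Phat_N)
    (c₁ c₂ a : ℝ) (hc₁ : 0 < c₁) (hc₂ : 0 < c₂) (ha : 1 < a)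
    (hDmeas : Measurable fun ω => wDist Pstar (Phat ω))
    (htail₁ : ∀ r : ℝ, 0 < r → r ≤ 1 →
      μ {ω | r ≤ wDist Pstar (Phat ω)} ≤
        ENNReal.ofReal (c₁ * Real.exp (-(c₂ * N * r ^ (max (m : ℝ) 2)))))
    (htail₂ : ∀ r : ℝ, 1 < r →
      μ {ω | r ≤ wDist Pstar (Phat ω)} ≤
        ENNReal.ofReal (c₁ * Real.exp (-(c₂ * N * r ^ a)))) :
    (∫ ω, ((∫ ξ, h (xhat ω) ξ ∂Pstar) - (⨅ x, ∫ ξ, h x ξ ∂Pstar)) ∂μ) ≤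
      ε * (⨅ x, ∫ ξ, h x ξ ∂Pstar) + (2 + ε) * L *
        ((∫ t in Set.Ioi (0 : ℝ), c₁ * Real.exp (-(c₂ * t ^ (max (m : ℝ) 2))))
            * (N : ℝ) ^ (-1 / (max (m : ℝ) 2))
          + (∫ t in Set.Ioi (0 : ℝ), c₁ * Real.exp (-(c₂ * t ^ a)))
            * (N : ℝ) ^ (-1 / a)) :=
  expected_generalization_bound_general hN μ h L hL hLip Pstar hPstarmom ξs Phat hPhat ε hε τ hτ
    hfin hfinPstar xhat khat hfeas c₁ c₂ a hc₁ hc₂ ha hDmeas htail₁ htail₂
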